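/- Under the generative distribution D^(i) for a tree circuit with gates in {AND, OR, NAND, NOR} (as defined by uniform sampling of consistent patterns, starting from a uniform ±1 label), for every coordinate j: |E[x_j y]| = |P(x_j=1|y=1) − P(x_j=1|y=−1)| = (2/3)^i, and in particular |E[x_j y]| − E[y] ≥ (2/3)^d = n^{log₂(2/3)} for every layer i ≤ d, where n = 2^d. -/

import Mathlib

/-- The allowed gate types for the generative model: AND, OR, NAND, NOR. -/
inductive BGate | and | or | nand | nor

/-- Evaluation of a gate on ±1-encoded booleans (1 = true, −1 = false). -/
def BGate.eval : BGate → ℤ → ℤ → ℤ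
  | .and,  a, b => if a = 1 ∧ b = 1 then 1 else -1
  | .or,   a, b => if a = 1 ∨ b = 1 then 1 else -1
  | .nand, a, b => if a = 1 ∧ b = 1 then -1 else 1
  | .nor,  a, b => if a = 1 ∨ b = 1 then -1 else 1

/-- ±1 encoding of a boolean. -/
def pm (b : Bool) : ℤ := if b then 1 else -1

/-- Number of input patterns in {±1}² on which gate `g` outputs `c`. -/
def BGate.patCount (g : BGate) (c : ℤ) : ℕ :=
  (Finset.univ.filter (fun p : Bool × Bool => g.eval (pm p.1) (pm p.2) = c)).card

/-- The values of the previous (coarser) layer determined by a configuration `x`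
of layer `i+1`: bit `j` is the gate `γ j` applied to the pair `(x_{2j}, x_{2j+1})`. -/
def prevLayer (i : ℕ) (γ : ℕ → BGate) (x : Fin (2^(i+1)) → ℤ) (j : Fin (2^i)) : ℤ :=
  (γ j).eval (x ⟨2*j.1, by have h := j.2; rw [pow_succ]; omega⟩)
             (x ⟨2*j.1+1, by have h := j.2; rw [pow_succ]; omega⟩)

/-- Probability mass function of the generative distribution `D^(i)` on
configurations of layer `i` together with the label: `D^(0)` identifies the
single bit with a uniform ±1 label, and `D^(i+1)` is obtained from `D^(i)` by
replacing each bit `z_j` with a uniformly random pattern in {±1}² among those on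
which gate `γ i j` outputs `z_j`. -/
noncomputable def genMass (γ : ℕ → ℕ → BGate) : (i : ℕ) → (Fin (2^i) → ℤ) → ℤ → ℝ
  | 0 => fun x y => if x ⟨0, by norm_num⟩ = y ∧ (y = 1 ∨ y = -1) then 1/2 else 0
  | (i+1) => fun x y =>
      if ∀ j, x j = 1 ∨ x j = -1 then
        genMass γ i (prevLayer i (γ i) x) y *
          ∏ j : Fin (2^i), ((((γ i j).patCount (prevLayer i (γ i) x j) : ℝ)))⁻¹
      else 0

/-- Probability of an event under the generative distribution `D^(i)`. -/
noncomputable def genPr (γ : ℕ → ℕ → BGate) (i : ℕ)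
    (E : (Fin (2^i) → ℤ) → ℤ → Prop) [∀ x y, Decidable (E x y)] : ℝ :=
  ∑ s : Fin (2^i) → Bool, ∑ b : Bool,
    if E (fun j => pm (s j)) (pm b) then genMass γ i (fun j => pm (s j)) (pm b) else 0

/-- Expectation of `f(x, y)` under the generative distribution `D^(i)`. -/
noncomputable def genE (γ : ℕ → ℕ → BGate) (i : ℕ)
    (f : (Fin (2^i) → ℤ) → ℤ → ℝ) : ℝ :=
  ∑ s : Fin (2^i) → Bool, ∑ b : Bool,
    f (fun j => pm (s j)) (pm b) * genMass γ i (fun j => pm (s j)) (pm b)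

/-!
Conditionally on layer `i`, the input pairs of distinct gates of layer `i + 1` are independent and
uniform on the fibres of the gates, so an expectation of `f (x_(2k+r), y)` under `D^(i+1)` is an
expectation under `D^(i)` of the average of `f` over the fibre of `z_k`. For each of the four
gates, the average of either input over the fibre of `c = ±1` is `a + b c` with `|b| = 2/3`.
Since `E[y] = 0` at every layer, `E[x y]` is multiplied by `b` at each layer, starting from
`E[y²] = 1`; and `P(y = ±1) = 1/2` turns the difference of conditional probabilities into
`E[x y]`.
-/

open Finset
open scoped BigOperators

theorem Fintype.sum_mul_prod_comp_eq_sum_mul_prod_fiber {ι β α R : Type*} [Fintype ι]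
    [DecidableEq ι] [Fintype β] [Fintype α] [DecidableEq α] [CommSemiring R]
    (e : ι → β → α) (H : (ι → α) → R) (w : ι → β → R) :
    ∑ t : ι → β, H (fun j => e j (t j)) * ∏ j, w j (t j) =
      ∑ σ : ι → α, H σ * ∏ j, ∑ p with e j p = σ j, w j p := by
  simp_rw [sum_filter, Fintype.prod_sum, Fintype.prod_ite_zero, mul_sum, ← funext_iff]
  rw [sum_comm]
  simp [eq_comm]

lemma pm_injective : Function.Injective pm := by decide

lemma pm_eq_one_or (b : Bool) : pm b = 1 ∨ pm b = -1 := by cases b <;> simp [pm]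

def BGate.evalB : BGate → Bool → Bool → Bool
  | .and, a, b => a && b
  | .or, a, b => a || b
  | .nand, a, b => !(a && b)
  | .nor, a, b => !(a || b)

lemma BGate.eval_pm (g : BGate) (a b : Bool) : g.eval (pm a) (pm b) = pm (g.evalB a b) := by
  cases g <;> cases a <;> cases b <;> decide

def BGate.fiber (g : BGate) (c : ℤ) : Finset (Bool × Bool) :=
  {p | g.eval (pm p.1) (pm p.2) = c}

lemma BGate.fiber_pm (g : BGate) (c : Bool) :
    g.fiber (pm c) = ({p | g.evalB p.1 p.2 = c} : Finset (Bool × Bool)) := by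
  simp [BGate.fiber, BGate.eval_pm, pm_injective.eq_iff]

lemma BGate.fiber_pm_nonempty (g : BGate) (c : Bool) : (g.fiber (pm c)).Nonempty := by
  cases g <;> cases c <;> decide

lemma BGate.sum_inv_card_fiber_mul_eq_expect (g : BGate) (c : Bool) (F : Bool × Bool → ℝ) :
    ∑ p with g.evalB p.1 p.2 = c, (#(g.fiber (pm (g.evalB p.1 p.2))) : ℝ)⁻¹ * F p =
      𝔼 p ∈ g.fiber (pm c), F p := by
  rw [sum_congr rfl fun p hp => by rw [(mem_filter.1 hp).2], ← mul_sum, expect_eq_sum_div_card,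
    g.fiber_pm, div_eq_inv_mul]

noncomputable def BGate.meanOffset : BGate → ℝ
  | .and => 1/3 | .or => -1/3 | .nand => 1/3 | .nor => -1/3

noncomputable def BGate.meanSlope : BGate → ℝ
  | .and => 2/3 | .or => 2/3 | .nand => -2/3 | .nor => -2/3

lemma BGate.abs_meanSlope (g : BGate) : |g.meanSlope| = 2/3 := by
  cases g <;> norm_num [BGate.meanSlope, abs_of_pos]

lemma BGate.expect_fiber_pm (g : BGate) (r : Fin 2) (c : Bool) :
    𝔼 p ∈ g.fiber (pm c), (pm (![p.1, p.2] r) : ℝ) = g.meanOffset + g.meanSlope * pm c := by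
  rw [expect_eq_sum_div_card, g.fiber_pm]
  fin_cases r <;> cases g <;> cases c <;>
    simp [sum_filter, card_filter, -sum_boole, Fintype.sum_prod_type, BGate.evalB, pm,
      BGate.meanOffset, BGate.meanSlope] <;> norm_num

def pairIdx (i : ℕ) : Fin (2^i) × Fin 2 ≃ Fin (2^(i+1)) :=
  finProdFinEquiv.trans (finCongr (pow_succ 2 i).symm)

def pairUp (i : ℕ) : (Fin (2^i) → Bool × Bool) ≃ (Fin (2^(i+1)) → Bool) :=
  ((Equiv.piCongrRight fun _ => (finTwoArrowEquiv Bool).symm).trans (Equiv.curry _ _ _).symm).trans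
    ((pairIdx i).arrowCongr (Equiv.refl Bool))

lemma pairUp_pairIdx (i : ℕ) (t : Fin (2^i) → Bool × Bool) (j : Fin (2^i)) (r : Fin 2) :
    pairUp i t (pairIdx i (j, r)) = ![(t j).1, (t j).2] r := by
  simp [pairUp]

lemma pairIdx_zero (i : ℕ) (j : Fin (2^i)) :
    pairIdx i (j, 0) = ⟨2 * j, by have := j.2; rw [pow_succ]; omega⟩ := by
  ext; simp [pairIdx]

lemma pairIdx_one (i : ℕ) (j : Fin (2^i)) :
    pairIdx i (j, 1) = ⟨2 * j + 1, by have := j.2; rw [pow_succ]; omega⟩ := by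
  ext; simp [pairIdx, add_comm]

lemma prevLayer_pairUp (i : ℕ) (γ : ℕ → BGate) (t : Fin (2^i) → Bool × Bool) :
    prevLayer i γ (fun k => pm (pairUp i t k)) =
      fun j : Fin (2^i) => pm ((γ j).evalB (t j).1 (t j).2) := by
  ext j
  rw [prevLayer, ← pairIdx_zero, ← pairIdx_one, pairUp_pairIdx, pairUp_pairIdx, BGate.eval_pm]
  rfl

section generative

variable (γ : ℕ → ℕ → BGate)

lemma genMass_succ_pairUp (i : ℕ) (t : Fin (2^i) → Bool × Bool) (y : ℤ) :
    genMass γ (i+1) (fun k => pm (pairUp i t k)) y =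
      genMass γ i (fun j => pm ((γ i j).evalB (t j).1 (t j).2)) y *
        ∏ j : Fin (2^i),
          (#((γ i j).fiber (pm ((γ i j).evalB (t j).1 (t j).2))) : ℝ)⁻¹ := by
  rw [genMass]
  dsimp only
  rw [if_pos fun k => pm_eq_one_or _, prevLayer_pairUp]
  rfl

theorem genE_succ_coord_eq_expect_fiber (i : ℕ) (j : Fin (2^i)) (r : Fin 2)
    (f : ℤ → ℤ → ℝ) :
    genE γ (i+1) (fun x y => f (x (pairIdx i (j, r))) y) =
      genE γ i (fun z y => 𝔼 p ∈ (γ i j).fiber (z j), f (pm (![p.1, p.2] r)) y) := by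
  unfold genE
  rw [sum_comm, sum_comm (s := (univ : Finset (Fin (2^i) → Bool)))]
  refine sum_congr rfl fun b _ => ?_
  let w (k : Fin (2^i)) (p : Bool × Bool) : ℝ :=
    (#((γ i k).fiber (pm ((γ i k).evalB p.1 p.2))) : ℝ)⁻¹ *
      if k = j then f (pm (![p.1, p.2] r)) (pm b) else 1
  have hw (t : Fin (2^i) → Bool × Bool) : ∏ k, w k (t k) =
      f (pm (![(t j).1, (t j).2] r)) (pm b) *
        ∏ k : Fin (2^i),
          (#((γ i k).fiber (pm ((γ i k).evalB (t k).1 (t k).2))) : ℝ)⁻¹ := by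
    rw [prod_mul_distrib, prod_ite_eq' univ j, if_pos (mem_univ j), mul_comm]
  rw [← (pairUp i).sum_comp]
  simp only [genMass_succ_pairUp, pairUp_pairIdx, mul_left_comm _ (genMass γ i _ _), ← hw]
  rw [Fintype.sum_mul_prod_comp_eq_sum_mul_prod_fiber
    (fun (k : Fin (2^i)) p => (γ i k).evalB p.1 p.2)
    (fun σ => genMass γ i (fun k => pm (σ k)) (pm b)) w]
  refine sum_congr rfl fun σ _ => ?_
  rw [mul_comm, prod_eq_single j]
  · simp only [w, BGate.sum_inv_card_fiber_mul_eq_expect, if_true]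
  · intro k _ hk
    simp only [w, BGate.sum_inv_card_fiber_mul_eq_expect, if_neg hk]
    exact expect_const ((γ i k).fiber_pm_nonempty _) 1
  · exact fun h => absurd (mem_univ j) h

lemma genE_congr (i : ℕ) {f g : (Fin (2^i) → ℤ) → ℤ → ℝ}
    (h : ∀ (s : Fin (2^i) → Bool) (b : Bool),
      f (fun j => pm (s j)) (pm b) = g (fun j => pm (s j)) (pm b)) :
    genE γ i f = genE γ i g := by
  simp only [genE, h]

lemma genE_add_mul (i : ℕ) (a c : ℝ) (f g : (Fin (2^i) → ℤ) → ℤ → ℝ) :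
    genE γ i (fun x y => a * f x y + c * g x y) = a * genE γ i f + c * genE γ i g := by
  simp only [genE, mul_sum, ← sum_add_distrib, add_mul, mul_assoc]

lemma genPr_eq_genE (i : ℕ) (E : (Fin (2^i) → ℤ) → ℤ → Prop)
    [∀ x y, Decidable (E x y)] :
    genPr γ i E = genE γ i (fun x y => if E x y then 1 else 0) := by
  simp only [genPr, genE, ite_mul, one_mul, zero_mul]

lemma genE_zero (f : (Fin (2^0) → ℤ) → ℤ → ℝ) :
    genE γ 0 f = (f (fun _ => 1) 1 + f (fun _ => -1) (-1)) / 2 := by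
  have : Unique (Fin (2^0)) := inferInstanceAs (Unique (Fin 1))
  rw [genE, ← (Equiv.funUnique (Fin (2^0)) Bool).symm.sum_comp]
  simp [genMass, pm]
  ring

lemma genE_succ_label (i : ℕ) (f : ℤ → ℝ) :
    genE γ (i+1) (fun _ y => f y) = genE γ i (fun _ y => f y) := by
  rw [genE_succ_coord_eq_expect_fiber γ i ⟨0, Nat.two_pow_pos i⟩ 0 (fun _ y => f y)]
  exact genE_congr γ i fun s b => expect_const ((γ i 0).fiber_pm_nonempty _) _

lemma genE_one (i : ℕ) : genE γ i (fun _ _ => 1) = 1 := by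
  induction i with
  | zero => norm_num [genE_zero]
  | succ i ih => rw [genE_succ_label γ i (fun _ => 1), ih]

lemma genE_label (i : ℕ) : genE γ i (fun _ y => (y : ℝ)) = 0 := by
  induction i with
  | zero => norm_num [genE_zero]
  | succ i ih => rw [genE_succ_label γ i (fun y => (y : ℝ)), ih]

lemma abs_genE_coord_mul_label (i : ℕ) (j : Fin (2^i)) :
    |genE γ i (fun x y => (x j : ℝ) * (y : ℝ))| = (2/3) ^ i := by
  induction i with
  | zero => norm_num [genE_zero]
  | succ i ih =>
    obtain ⟨⟨k, r⟩, rfl⟩ := (pairIdx i).surjective j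
    let g := γ i k
    have hfiber :
        genE γ i (fun z y => 𝔼 p ∈ g.fiber (z k), (pm (![p.1, p.2] r) : ℝ) * (y : ℝ)) =
        genE γ i (fun z y => g.meanOffset * (y : ℝ) + g.meanSlope * ((z k : ℝ) * (y : ℝ))) :=
      genE_congr γ i fun s b => by rw [← expect_mul, g.expect_fiber_pm]; ring
    rw [genE_succ_coord_eq_expect_fiber γ i k r (fun a y => (a : ℝ) * (y : ℝ)), hfiber,
      genE_add_mul, genE_label, mul_zero, zero_add, abs_mul, g.abs_meanSlope, ih, pow_succ']

lemma genPr_label_eq_half (i : ℕ) (c : ℤ) (hc : c = 1 ∨ c = -1) :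
    genPr γ i (fun _ y => y = c) = 1/2 := by
  have hpt : genE γ i (fun _ y => if y = c then 1 else 0) =
      genE γ i (fun x y =>
        1/2 * (fun _ _ => (1 : ℝ)) x y + (c/2 : ℝ) * (fun _ y => (y : ℝ)) x y) :=
    genE_congr γ i fun _ b => by rcases hc with rfl | rfl <;> cases b <;> norm_num [pm]
  rw [genPr_eq_genE, hpt, genE_add_mul, genE_one, genE_label]
  ring

lemma genE_coord_mul_label_eq_genPr (i : ℕ) (j : Fin (2^i)) :
    genE γ i (fun x y => (x j : ℝ) * (y : ℝ)) =
      2 * genPr γ i (fun x y => x j = 1 ∧ y = 1) -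
        2 * genPr γ i (fun x y => x j = 1 ∧ y = -1) := by
  let xy : (Fin (2^i) → ℤ) → ℤ → ℝ := fun x y => (x j : ℝ) * (y : ℝ)
  let A : (Fin (2^i) → ℤ) → ℤ → ℝ := fun x y => if x j = 1 ∧ y = 1 then 1 else 0
  let B : (Fin (2^i) → ℤ) → ℤ → ℝ := fun x y => if x j = 1 ∧ y = -1 then 1 else 0
  calc genE γ i xy
      = 1 * genE γ i (fun _ y => (y : ℝ)) + 1 * genE γ i xy := by rw [genE_label]; ring
    _ = genE γ i (fun x y => 1 * (y : ℝ) + 1 * xy x y) := (genE_add_mul ..).symm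
    _ = genE γ i (fun x y => 2 * A x y + (-2) * B x y) :=
        genE_congr γ i fun s b => by cases hs : s j <;> cases b <;> norm_num [xy, A, B, pm, hs]
    _ = _ := by rw [genE_add_mul, genPr_eq_genE, genPr_eq_genE]; ring

end generative

lemma pow_eq_pow_rpow_logb {a b : ℝ} (ha : 0 < a) (hb : 0 < b) (hb1 : b ≠ 1) (d : ℕ) :
    a ^ d = (b ^ d) ^ Real.logb b a := by
  rw [← Real.rpow_natCast_mul hb.le, mul_comm, Real.rpow_mul_natCast hb.le,
    Real.rpow_logb hb hb1 ha]

/-- under `D^(i)` (layer `i ≤ d` of a circuit of depth `d`, `n = 2^d`),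
for every coordinate `j`: `|E[x_j y]| = |P(x_j=1|y=1) − P(x_j=1|y=−1)| = (2/3)^i`,
and in particular `|E[x_j y]| − E[y] ≥ (2/3)^d = n^{log₂(2/3)}`. -/
theorem stmt7 (γ : ℕ → ℕ → BGate) (d i : ℕ) (hid : i ≤ d) (n : ℕ) (hn : n = 2^d)
    (j : Fin (2^i)) :
    |genE γ i (fun x y => (x j : ℝ) * (y : ℝ))| =
      |genPr γ i (fun x y => x j = 1 ∧ y = 1) / genPr γ i (fun _ y => y = 1) -
       genPr γ i (fun x y => x j = 1 ∧ y = -1) / genPr γ i (fun _ y => y = -1)| ∧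
    |genE γ i (fun x y => (x j : ℝ) * (y : ℝ))| = (2/3 : ℝ)^i ∧
    |genE γ i (fun x y => (x j : ℝ) * (y : ℝ))| - genE γ i (fun _ y => (y : ℝ))
      ≥ (2/3 : ℝ)^d ∧
    (2/3 : ℝ)^d = (n : ℝ) ^ (Real.logb 2 (2/3)) := by
  refine ⟨?_, abs_genE_coord_mul_label γ i j, ?_, ?_⟩
  · rw [genE_coord_mul_label_eq_genPr, genPr_label_eq_half γ i 1 (.inl rfl),
      genPr_label_eq_half γ i (-1) (.inr rfl)]
    ring_nf
  · rw [abs_genE_coord_mul_label, genE_label, sub_zero]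
    exact pow_le_pow_of_le_one (by norm_num) (by norm_num) hid
  · rw [hn, Nat.cast_pow, Nat.cast_ofNat]
    exact pow_eq_pow_rpow_logb (by norm_num) two_pos (by norm_num) d
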